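/- arXiv:2309.13834 — 3 statements merged into one kernel-verified Lean document; each statement's English description precedes it below -/
import Mathlib

section
/- Let n : ℕ and let R : EuclideanSpace ℝ (Fin n) →L[ℝ] EuclideanSpace ℝ (Fin n) be a continuous linear map with operator norm ‖R‖ = 1. Then the following are equivalent: (i) for all h t : EuclideanSpace ℝ (Fin n) with ‖h‖ = 1, ‖t‖ = 1 and h ≠ t, one has ⟪h, R t⟫ < ⟪h, R h⟫; (ii) R is the identity map. In other words, the identity is the unique norm-one operator satisfying (i), so UniBi models the law of identity. -/
/-!
Via the adjoint, the hypothesis says that for every unit vector `h` the linear functional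
`t ↦ ⟪R† h, t⟫` attains its maximum on the unit sphere only at `t = h`. By the equality case
of Cauchy–Schwarz this forces `R† h = ‖R† h‖ • h`, so every vector is an eigenvector of `R†` with
a nonnegative eigenvalue; hence `R† = c • id` with `c ≥ 0`, and `‖R†‖ = ‖R‖ = 1` gives `c = 1`.
-/

open scoped RealInnerProductSpace

theorem LinearMap.exists_eq_smul_id_of_forall_exists_smul {K V : Type*} [Field K]
    [AddCommGroup V] [Module K V] {f : V →ₗ[K] V} (hf : ∀ v, ∃ a : K, f v = a • v) :
    ∃ a : K, f = a • 1 := by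
  refine exists_eq_smul_id_of_forall_notLinearIndependent fun v ↦ ?_
  rcases eq_or_ne v 0 with rfl | hv
  · exact fun hli ↦ hli.ne_zero 0 rfl
  · obtain ⟨a, ha⟩ := hf v
    simpa [LinearIndependent.pair_iff' hv] using ⟨a, ha.symm⟩

section
variable {F : Type*} [NormedAddCommGroup F] [InnerProductSpace ℝ F]

theorem eq_norm_smul_of_forall_inner_lt {v h : F} (hh : ‖h‖ = 1)
    (hmax : ∀ t : F, ‖t‖ = 1 → t ≠ h → ⟪v, t⟫ < ⟪v, h⟫) : v = ‖v‖ • h := by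
  suffices hvh : ⟪v, h⟫ = ‖v‖ * ‖h‖ by
    simpa [hh] using inner_eq_norm_mul_iff_real.mp hvh
  refine le_antisymm (real_inner_le_norm v h) (not_lt.mp fun hlt ↦ ?_)
  rw [hh, mul_one] at hlt
  have hv : v ≠ 0 := by rintro rfl; simp at hlt
  have hvt : ⟪v, ‖v‖⁻¹ • v⟫ = ‖v‖ := by
    rw [real_inner_smul_right, real_inner_self_eq_norm_sq]
    field_simp
  have hth : ‖v‖⁻¹ • v ≠ h := by rintro heq; rw [heq] at hvt; linarith
  have hunit : ‖‖v‖⁻¹ • v‖ = 1 := by simp [norm_smul, inv_mul_cancel₀ (norm_ne_zero_iff.mpr hv)]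
  linarith [hmax _ hunit hth]

theorem ContinuousLinearMap.eq_norm_smul_id_of_forall_norm_eq_one {f : F →L[ℝ] F}
    (hf : ∀ u : F, ‖u‖ = 1 → f u = ‖f u‖ • u) : f = ‖f‖ • ContinuousLinearMap.id ℝ F := by
  have heig : ∀ v, ∃ a : ℝ, f v = a • v := by
    intro v
    rcases eq_or_ne v 0 with rfl | hv
    · exact ⟨0, by simp⟩
    set u := ‖v‖⁻¹ • v
    have hv_eq : v = ‖v‖ • u := (smul_inv_smul₀ (norm_ne_zero_iff.mpr hv) v).symm
    have hu : ‖u‖ = 1 := by simp [u, norm_smul, inv_mul_cancel₀ (norm_ne_zero_iff.mpr hv)]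
    refine ⟨‖f u‖, ?_⟩
    calc f v = ‖v‖ • f u := by rw [hv_eq, map_smul, ← hv_eq]
      _ = ‖v‖ • ‖f u‖ • u := congrArg (‖v‖ • ·) (hf u hu)
      _ = ‖f u‖ • v := by rw [smul_comm, ← hv_eq]
  obtain ⟨a, ha⟩ := LinearMap.exists_eq_smul_id_of_forall_exists_smul heig
  have hfa : f = a • ContinuousLinearMap.id ℝ F := by
    ext v; exact LinearMap.congr_fun ha v
  rcases subsingleton_or_nontrivial F with hF | hF
  · ext v; exact Subsingleton.elim _ _
  obtain ⟨u, hu⟩ := exists_norm_eq F zero_le_one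
  have hau : a • u = |a| • u := by
    simpa [hfa, norm_smul, hu] using hf u hu
  have ha_nonneg : 0 ≤ a := by
    have := smul_left_injective ℝ (norm_ne_zero_iff.mp (hu ▸ one_ne_zero)) hau
    exact abs_eq_self.mp this.symm
  rw [hfa, norm_smul, ContinuousLinearMap.norm_id, Real.norm_of_nonneg ha_nonneg, mul_one]
end

/-- The identity is the unique operator of operator norm one satisfying the
identity-modeling property: UniBi models the law of identity. -/
theorem unibi_models_law_of_identity (n : ℕ)
    (R : EuclideanSpace ℝ (Fin n) →L[ℝ] EuclideanSpace ℝ (Fin n)) (hR : ‖R‖ = 1) :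
    (∀ h t : EuclideanSpace ℝ (Fin n), ‖h‖ = 1 → ‖t‖ = 1 → h ≠ t → ⟪h, R t⟫ < ⟪h, R h⟫) ↔
      R = ContinuousLinearMap.id ℝ (EuclideanSpace ℝ (Fin n)) := by
  open ContinuousLinearMap in
  constructor
  · intro hmax
    have hadj : ∀ h, ‖h‖ = 1 → adjoint R h = ‖adjoint R h‖ • h := fun h hh ↦
      eq_norm_smul_of_forall_inner_lt hh fun t ht hth ↦ by
        simpa only [adjoint_inner_left] using hmax h t hh ht (Ne.symm hth)
    have hid : adjoint R = ContinuousLinearMap.id ℝ _ := by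
      rw [eq_norm_smul_id_of_forall_norm_eq_one hadj, LinearIsometryEquiv.norm_map, hR, one_smul]
    rw [← adjoint_adjoint R, hid, adjoint_id]
  · rintro rfl h t hh ht hne
    have hself : ⟪h, h⟫ = 1 := by rw [real_inner_self_eq_norm_sq, hh, one_pow]
    simpa only [ContinuousLinearMap.id_apply, hself] using
      (inner_lt_one_iff_real_of_norm_eq_one hh ht).mpr hne
end

section
/- Let n : ℕ and let R : EuclideanSpace ℝ (Fin n) →L[ℝ] EuclideanSpace ℝ (Fin n) be a continuous linear map with operator norm ‖R‖ = 1 and R not equal to the identity map. Then there exist h t : EuclideanSpace ℝ (Fin n) with ‖h‖ = 1, ‖t‖ = 1, h ≠ t and ⟪h, R h⟫ ≤ ⟪h, R t⟫. (Any norm-one operator other than the identity fails to model the identity relation.) -/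
open scoped RealInnerProductSpace InnerProduct

/-!
Since `⟪h, R t⟫ = ⟪R† h, t⟫`, the unit vector `t = ‖R† h‖⁻¹ • R† h` gives
`⟪h, R t⟫ = ‖R† h‖ ≥ ⟪h, R h⟫`, so a unit vector `h` witnesses the failure unless `R† h` is a
nonnegative multiple of `h`. If that happens for every unit `h`, every vector is an eigenvector
of `R†`, so `R† = c • id` with `c = ‖R†‖ = ‖R‖ = 1`, i.e. `R = id`.
-/

namespace ContinuousLinearMap

theorem exists_eq_smul_id_of_forall_exists_apply_eq_smul {K V : Type*} [Field K] [AddCommGroup V]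
    [Module K V] [TopologicalSpace V] [ContinuousConstSMul K V] {f : V →L[K] V}
    (hf : ∀ v, ∃ a : K, f v = a • v) : ∃ c : K, f = c • ContinuousLinearMap.id K V := by
  obtain ⟨c, hc⟩ := (f : V →ₗ[K] V).exists_eq_smul_id_of_forall_notLinearIndependent fun v => by
    obtain ⟨a, ha⟩ := hf v
    rw [LinearIndependent.pair_iff]
    intro h
    simpa using (h a (-1) (by simp [ha])).2
  exact ⟨c, ext fun v => by simpa using LinearMap.congr_fun hc v⟩

variable {E : Type*} [NormedAddCommGroup E] [NormedSpace ℝ E]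

theorem eq_norm_smul_id_of_forall_norm_eq_one_s6 {T : E →L[ℝ] E}
    (hT : ∀ h, ‖h‖ = 1 → T h = ‖T h‖ • h) : T = ‖T‖ • ContinuousLinearMap.id ℝ E := by
  have eigen : ∀ v, ∃ a : ℝ, T v = a • v := by
    intro v
    rcases eq_or_ne v 0 with rfl | hv
    · exact ⟨0, by simp⟩
    refine ⟨‖T (‖v‖⁻¹ • v)‖, ?_⟩
    have := hT (‖v‖⁻¹ • v) (norm_smul_inv_norm hv)
    rw [map_smul, smul_comm] at this
    simpa [hv] using congrArg (‖v‖ • ·) this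
  obtain ⟨c, rfl⟩ := exists_eq_smul_id_of_forall_exists_apply_eq_smul eigen
  rcases subsingleton_or_nontrivial E with hE | hE
  · exact Subsingleton.elim _ _
  obtain ⟨h, hh⟩ := exists_norm_eq E zero_le_one
  have hc : c = ‖c‖ := by
    have := hT h hh
    simp only [smul_apply, id_apply, norm_smul, hh, mul_one] at this
    exact smul_left_injective ℝ (norm_ne_zero_iff.mp (hh ▸ one_ne_zero)) this
  rw [norm_smul, norm_id, mul_one, ← hc]

end ContinuousLinearMap

variable {E : Type*} [NormedAddCommGroup E] [InnerProductSpace ℝ E]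

theorem exists_norm_eq_one_ne_inner_le_inner {x h : E} (hh : ‖h‖ = 1) (hx : x ≠ ‖x‖ • h) :
    ∃ t : E, ‖t‖ = 1 ∧ t ≠ h ∧ ⟪x, h⟫ ≤ ⟪x, t⟫ := by
  have hx0 : x ≠ 0 := by rintro rfl; simp at hx
  refine ⟨‖x‖⁻¹ • x, norm_smul_inv_norm hx0, fun hxh => hx ?_, ?_⟩
  · rw [← hxh, smul_smul, mul_inv_cancel₀ (norm_ne_zero_iff.mpr hx0), one_smul]
  · calc ⟪x, h⟫ ≤ ‖x‖ * ‖h‖ := real_inner_le_norm x h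
      _ = ⟪x, ‖x‖⁻¹ • x⟫ := by
        rw [hh, mul_one, real_inner_smul_right, real_inner_self_eq_norm_sq,
          sq, inv_mul_cancel_left₀ (norm_ne_zero_iff.mpr hx0)]

/-- Any norm-one operator other than the identity fails to model the identity relation. -/
theorem non_identity_fails_identity (n : ℕ)
    (R : EuclideanSpace ℝ (Fin n) →L[ℝ] EuclideanSpace ℝ (Fin n)) (hR : ‖R‖ = 1)
    (hne : R ≠ ContinuousLinearMap.id ℝ (EuclideanSpace ℝ (Fin n))) :
    ∃ h t : EuclideanSpace ℝ (Fin n),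
      ‖h‖ = 1 ∧ ‖t‖ = 1 ∧ h ≠ t ∧ ⟪h, R h⟫ ≤ ⟪h, R t⟫ := by
  by_cases hex : ∃ h : EuclideanSpace ℝ (Fin n), ‖h‖ = 1 ∧ (R†) h ≠ ‖(R†) h‖ • h
  · obtain ⟨h, hh, hRh⟩ := hex
    obtain ⟨t, ht, hth, hle⟩ := exists_norm_eq_one_ne_inner_le_inner hh hRh
    refine ⟨h, t, hh, ht, hth.symm, ?_⟩
    simpa only [ContinuousLinearMap.adjoint_inner_left] using hle
  · push Not at hex
    have hadj := ContinuousLinearMap.eq_norm_smul_id_of_forall_norm_eq_one_s6 hex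
    rw [LinearIsometryEquiv.norm_map, hR, one_smul] at hadj
    refine absurd ?_ hne
    rw [← ContinuousLinearMap.adjoint_adjoint R, hadj, ContinuousLinearMap.adjoint_id]
end

section
/- Let n : ℕ and let σ : Fin n → ℝ satisfy σ k ≥ 0 for all k, and suppose there exist indices i ≠ j with σ i > σ j. Let D = Matrix.diagonal σ. Then there exist h t : Fin n → ℝ with ∑ k, (h k)^2 = 1, ∑ k, (t k)^2 = 1, h ≠ t, and h ⬝ᵥ (D *ᵥ h) < h ⬝ᵥ (D *ᵥ t). (A nonnegative diagonal matrix with two distinct diagonal entries fails to model the identity relation on unit vectors.) -/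
/-!
Everything happens in the plane spanned by `e i` and `e j`, where `D` acts as `diag (p, q)`
with `p ≠ q`. Take `h = (e i + e j) / √2` and let `t` be the direction of `D h`. Then
`hᵀ D h = (p + q) / 2` is the arithmetic mean of `p` and `q`, while `hᵀ D t = ‖D h‖` is their
quadratic mean, which is strictly larger because `p ≠ q`.
-/

open scoped Matrix
open Matrix

section SingleAddSingle

variable {R ι : Type*} [CommRing R] [Fintype ι] [DecidableEq ι] {i j : ι}

theorem sum_sq_single_add_single (hij : i ≠ j) (a b : R) :
    ∑ k, (Pi.single i a + Pi.single j b : ι → R) k ^ 2 = a ^ 2 + b ^ 2 := by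
  simp [Finset.sum_add_distrib, add_sq, Pi.single_apply, hij.symm]

theorem single_add_single_dotProduct_diagonal_mulVec (hij : i ≠ j) (σ : ι → R)
    (a b c d : R) :
    (Pi.single i a + Pi.single j b) ⬝ᵥ (diagonal σ *ᵥ (Pi.single i c + Pi.single j d))
      = a * σ i * c + b * σ j * d := by
  simp [mulVec_add, dotProduct_add, hij, hij.symm]
  ring

end SingleAddSingle

theorem exists_unit_vectors_diag_two_lt {p q : ℝ} (hpq : p ≠ q) :
    ∃ a b c d : ℝ, a ^ 2 + b ^ 2 = 1 ∧ c ^ 2 + d ^ 2 = 1 ∧ (a, b) ≠ (c, d) ∧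
      a * p * a + b * q * b < a * p * c + b * q * d := by
  have hsub : 0 < (p - q) ^ 2 := sq_pos_of_ne_zero (sub_ne_zero.mpr hpq)
  have hpq2 : 0 < p ^ 2 + q ^ 2 := by nlinarith [sq_nonneg (p + q)]
  set s := √(p ^ 2 + q ^ 2)
  have hs : 0 < s := Real.sqrt_pos.mpr hpq2
  have hs2 : s ^ 2 = p ^ 2 + q ^ 2 := Real.sq_sqrt hpq2.le
  set r := √2⁻¹
  have hr : 0 < r := by positivity
  have hr2 : r ^ 2 = 2⁻¹ := Real.sq_sqrt (by norm_num)
  refine ⟨r, r, p / s, q / s, by linarith, ?_, ?_, ?_⟩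
  · rw [div_pow, div_pow, ← add_div, ← hs2, div_self (by positivity)]
  · intro h
    obtain ⟨hp, hq⟩ := Prod.mk.inj h
    exact hpq (by field_simp at hp hq; linarith)
  · have hmean : r * p * r + r * q * r = (p + q) / 2 := by linear_combination (p + q) * hr2
    have hqmean : r * p * (p / s) + r * q * (q / s) = r * s := by
      field_simp
      linear_combination hs2.symm
    rw [hmean, hqmean]
    refine lt_of_pow_lt_pow_left₀ 2 (by positivity) ?_
    rw [mul_pow, hr2, hs2]
    linarith

theorem diagonal_distinct_singular_values_fails_general (n : ℕ) (σ : Fin n → ℝ)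
    (i j : Fin n) (hij : i ≠ j) (hgt : σ i > σ j) :
    ∃ h t : Fin n → ℝ,
      (∑ k, (h k) ^ 2) = 1 ∧ (∑ k, (t k) ^ 2) = 1 ∧ h ≠ t ∧
      h ⬝ᵥ (Matrix.diagonal σ *ᵥ h) < h ⬝ᵥ (Matrix.diagonal σ *ᵥ t) := by
  obtain ⟨a, b, c, d, hab, hcd, hne, hlt⟩ := exists_unit_vectors_diag_two_lt hgt.ne'
  refine ⟨Pi.single i a + Pi.single j b, Pi.single i c + Pi.single j d, ?_, ?_, ?_, ?_⟩
  · rwa [sum_sq_single_add_single hij]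
  · rwa [sum_sq_single_add_single hij]
  · intro h
    have hi := congrFun h i
    have hj := congrFun h j
    simp only [Pi.add_apply, Pi.single_eq_same, Pi.single_eq_of_ne hij, Pi.single_eq_of_ne hij.symm,
      add_zero, zero_add] at hi hj
    exact hne (Prod.ext hi hj)
  · rwa [single_add_single_dotProduct_diagonal_mulVec hij,
      single_add_single_dotProduct_diagonal_mulVec hij]

/-- A nonnegative diagonal matrix with two distinct diagonal entries fails to model
the identity relation on unit vectors. -/
theorem diagonal_distinct_singular_values_fails (n : ℕ) (σ : Fin n → ℝ)
    (hσ : ∀ k, σ k ≥ 0) (i j : Fin n) (hij : i ≠ j) (hgt : σ i > σ j) :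
    ∃ h t : Fin n → ℝ,
      (∑ k, (h k) ^ 2) = 1 ∧ (∑ k, (t k) ^ 2) = 1 ∧ h ≠ t ∧
      h ⬝ᵥ (Matrix.diagonal σ *ᵥ h) < h ⬝ᵥ (Matrix.diagonal σ *ᵥ t) :=
  diagonal_distinct_singular_values_fails_general n σ i j hij hgt
end
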